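/- Let N_1, N_2 ∈ ℕ, let (X^{(1)}_{v_1}, v_1 ≤ N_1) and (X^{(2)}_{v_1,v_2}, v_1 ≤ N_1, v_2 ≤ N_2) be independent standard Gaussian families (all variables independent), and consider the hierarchical Gaussian field X_v = σ_1(v_1) X^{(1)}_{v_1} + σ_2 X^{(2)}_{v_1,v_2} for v = (v_1,v_2), where σ_2 > 0 and σ_1(v_1) > 0 may depend on v_1. Then for every β > 0, the expected log-partition function 𝔼[log Σ_v e^{βX_v}] is an increasing function of each variable σ_1(v_1). -/

import Mathlib

open MeasureTheory ProbabilityTheory Real Filter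

noncomputable section

/-- Vertices of the lattice `ℤ²`. -/
abbrev Vertex : Type := ℤ × ℤ

/-- The box `V_N = {1,…,N}²`. -/
def boxV (N : ℕ) : Finset Vertex := Finset.Icc 1 (N : ℤ) ×ˢ Finset.Icc 1 (N : ℤ)

/-- Two vertices of `ℤ²` are adjacent if they are nearest neighbours. -/
def adjacent (u v : Vertex) : Prop := |u.1 - v.1| + |u.2 - v.2| = 1

/-- The four nearest neighbours of a vertex. -/
def nbrs (v : Vertex) : Finset Vertex :=
  {(v.1 + 1, v.2), (v.1 - 1, v.2), (v.1, v.2 + 1), (v.1, v.2 - 1)}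

/-- `G` is the Green function of simple random walk on `ℤ²` killed upon exiting `A`:
it vanishes off `A` and satisfies the resolvent equation on `A`. -/
def IsGreenFn (A : Finset Vertex) (G : Vertex → Vertex → ℝ) : Prop :=
  (∀ v, v ∉ A → ∀ v', G v v' = 0) ∧
  (∀ v ∈ A, ∀ v', G v v' =
    (if v = v' then 1 else 0) + (1 / 4) * ∑ u ∈ nbrs v, G u v')

/-- `φ` is a centered Gaussian field on `A` (under `μ`) with covariance `G`: every
linear combination of the field over `A` is a centered real Gaussian variable with
the corresponding variance. -/
def IsGFF {Ω : Type} [MeasurableSpace Ω] (μ : Measure Ω) (A : Finset Vertex)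
    (φ : Vertex → Ω → ℝ) (G : Vertex → Vertex → ℝ) : Prop :=
  (∀ v, Measurable (φ v)) ∧
  ∀ c : Vertex → ℝ,
    Measure.map (fun ω => ∑ v ∈ A, c v * φ v ω) μ =
      gaussianReal 0 (∑ v ∈ A, ∑ v' ∈ A, c v * c v' * G v v').toNNReal

/-- The overlap `q(v,v') = E[φ_v φ_{v'}] / ((1/π) log N²)`. -/
def overlapQ (G : Vertex → Vertex → ℝ) (N : ℕ) (v v' : Vertex) : ℝ :=
  G v v' / ((1 / π) * Real.log ((N : ℝ) ^ 2))

/-- The partition function `Z(β) = Σ_{v ∈ A} e^{β φ_v}`. -/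
def Zsum {Ω : Type} (β : ℝ) (A : Finset Vertex) (φ : Vertex → Ω → ℝ) (ω : Ω) : ℝ :=
  ∑ v ∈ A, Real.exp (β * φ v ω)

/-- Averaged Gibbs expectation of a one-replica observable: `𝔼 𝒢_β[f(v)]`. -/
def gibbs1 {Ω : Type} [MeasurableSpace Ω] (μ : Measure Ω) (β : ℝ) (A : Finset Vertex)
    (φ : Vertex → Ω → ℝ) (f : Vertex → ℝ) : ℝ :=
  ∫ ω, (∑ v ∈ A, f v * Real.exp (β * φ v ω)) / Zsum β A φ ω ∂μ

/-- Averaged Gibbs expectation of a two-replica observable: `𝔼 𝒢_β^{×2}[f(v,v')]`. -/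
def gibbs2 {Ω : Type} [MeasurableSpace Ω] (μ : Measure Ω) (β : ℝ) (A : Finset Vertex)
    (φ : Vertex → Ω → ℝ) (f : Vertex → Vertex → ℝ) : ℝ :=
  ∫ ω, (∑ v ∈ A, ∑ v' ∈ A,
      f v v' * Real.exp (β * φ v ω) * Real.exp (β * φ v' ω)) / (Zsum β A φ ω) ^ 2 ∂μ

open Classical in
/-- The two-overlap distribution function `x_{β,N}(r) = 𝔼 𝒢^{×2}{q(v,v') ≤ r}`,
for the Gibbs measure on `A`. -/
def xTwoOverlap {Ω : Type} [MeasurableSpace Ω] (μ : Measure Ω) (β : ℝ) (A : Finset Vertex)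
    (φ : Vertex → Ω → ℝ) (G : Vertex → Vertex → ℝ) (N : ℕ) (r : ℝ) : ℝ :=
  gibbs2 μ β A φ (fun v v' => if overlapQ G N v v' ≤ r then 1 else 0)

/-- The boundary `∂V_N`: vertices outside `V_N` sharing an edge with `V_N`. -/
def bdryV (N : ℕ) : Set Vertex := {u | u ∉ boxV N ∧ ∃ v ∈ boxV N, adjacent u v}

/-- Euclidean distance between two vertices. -/
def eDist (u v : Vertex) : ℝ :=
  Real.sqrt (((u.1 - v.1 : ℤ) : ℝ) ^ 2 + ((u.2 - v.2 : ℤ) : ℝ) ^ 2)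

/-- `d_1(v,B)`, the Euclidean distance from `v` to a set `B` of vertices. -/
def dist1 (v : Vertex) (B : Set Vertex) : ℝ := sInf {r | ∃ u ∈ B, r = eDist v u}

open Classical in
/-- `A_{N,ρ} = {v ∈ V_N : d_1(v, ∂V_N) ≥ N^{1-ρ}}`. -/
def AN (N : ℕ) (ρ : ℝ) : Finset Vertex :=
  (boxV N).filter fun v => (N : ℝ) ^ (1 - ρ) ≤ dist1 v (bdryV N)

open Classical in
/-- `V_N^δ`, the set of points of `V_N` at distance greater than `δN` from `∂V_N`. -/
def VNdelta (N : ℕ) (δ : ℝ) : Finset Vertex :=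
  (boxV N).filter fun v => δ * (N : ℝ) < dist1 v (bdryV N)

/-- The box `[v]_t` of side length `N^{1-t}` centered at `v`, intersected with `V_N`. -/
def nbox (N : ℕ) (t : ℝ) (v : Vertex) : Set Vertex :=
  {u | u ∈ boxV N ∧ |((u.1 - v.1 : ℤ) : ℝ)| ≤ (N : ℝ) ^ (1 - t) / 2 ∧
    |((u.2 - v.2 : ℤ) : ℝ)| ≤ (N : ℝ) ^ (1 - t) / 2}

/-- The σ-algebra generated by the field variables `{φ_u : u ∈ S}`. -/
def fieldSigma {Ω : Type} [MeasurableSpace Ω] (φ : Vertex → Ω → ℝ) (S : Set Vertex) :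
    MeasurableSpace Ω :=
  ⨆ u ∈ S, MeasurableSpace.comap (φ u) inferInstance

/-- `E[φ_v | ℱ_{B^c}]`: the conditional expectation of `φ_v` given the field outside `B`
(within `V_N`). -/
def condOutside {Ω : Type} [MeasurableSpace Ω] (μ : Measure Ω) (N : ℕ)
    (φ : Vertex → Ω → ℝ) (B : Set Vertex) (v : Vertex) : Ω → ℝ :=
  μ[φ v | fieldSigma φ ((boxV N : Set Vertex) \ B)]

/-- `φ_{[v]_t} = E[φ_v | ℱ_{[v]_t^c}]`, with the convention `φ_{[v]_1} = φ_v`. -/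
def phiBox {Ω : Type} [MeasurableSpace Ω] (μ : Measure Ω) (N : ℕ) (t : ℝ)
    (φ : Vertex → Ω → ℝ) (v : Vertex) : Ω → ℝ :=
  if t < 1 then condOutside μ N φ (nbox N t v) v else φ v

/-- The `(α, σ⃗)`-GFF: `ψ_v = σ₁ φ_{[v]_α} + σ₂ (φ_v - φ_{[v]_α})`. -/
def psiField {Ω : Type} [MeasurableSpace Ω] (μ : Measure Ω) (N : ℕ) (α σ₁ σ₂ : ℝ)
    (φ : Vertex → Ω → ℝ) (v : Vertex) (ω : Ω) : ℝ :=
  σ₁ * phiBox μ N α φ v ω + σ₂ * (φ v ω - phiBox μ N α φ v ω)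

/-- The free energy of the `(α, σ⃗)`-GFF restricted to `A_{N,ρ}`. -/
def freeEnergyPsi {Ω : Type} [MeasurableSpace Ω] (μ : Measure Ω) (N : ℕ)
    (α σ₁ σ₂ ρ β : ℝ) (φ : Vertex → Ω → ℝ) (ω : Ω) : ℝ :=
  (1 / Real.log ((N : ℝ) ^ 2)) *
    Real.log (∑ v ∈ AN N ρ, Real.exp (β * psiField μ N α σ₁ σ₂ φ v ω))

/-- The REM free energy `f(β; σ²)` (with `σ = √σsq`). -/
def remFE (β σsq : ℝ) : ℝ :=
  if β ≤ Real.sqrt (2 * π) / Real.sqrt σsq then 1 + β ^ 2 * σsq / (2 * π)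
  else Real.sqrt (2 / π) * Real.sqrt σsq * β

/-- The limiting free energy `f^{(α,σ⃗)}(β)` of the `(α,σ⃗)`-GFF. -/
def fePsiLim (α σ₁ σ₂ β : ℝ) : ℝ :=
  if σ₁ ≤ σ₂ then remFE β (σ₁ ^ 2 * α + σ₂ ^ 2 * (1 - α))
  else α * remFE β (σ₁ ^ 2) + (1 - α) * remFE β (σ₂ ^ 2)

/-- The free energy of the 2D GFF. -/
def fGFF (β : ℝ) : ℝ :=
  if β ≤ Real.sqrt (2 * π) then 1 + β ^ 2 / (2 * π) else Real.sqrt (2 / π) * β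

/-- The overlap at scale `α`:
`q_α(v,v') = E[(φ_v - φ_{[v]_α})(φ_{v'} - φ_{[v']_α})] / ((1/π) log N²)`. -/
def overlapAtScale {Ω : Type} [MeasurableSpace Ω] (μ : Measure Ω) (N : ℕ) (α : ℝ)
    (φ : Vertex → Ω → ℝ) (v v' : Vertex) : ℝ :=
  (∫ ω, (φ v ω - phiBox μ N α φ v ω) * (φ v' ω - phiBox μ N α φ v' ω) ∂μ) /
    ((1 / π) * Real.log ((N : ℝ) ^ 2))

/-- The mean-one exponential distribution on `(0,∞)`. -/
def expMeasureOne : Measure ℝ :=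
  (volume.restrict (Set.Ioi (0 : ℝ))).withDensity fun x => ENNReal.ofReal (Real.exp (-x))

/-- `ξ` is a Poisson–Dirichlet variable with parameter `a` (under `μ`): it is equal in
law to the sequence of normalized, decreasingly ordered atoms `(Γ_i^{-1/a})_{i∈ℕ}` of a
Poisson random measure on `(0,∞)` with intensity `s^{-a-1}ds`, where
`Γ_i = E_0 + ⋯ + E_i` are the partial sums of i.i.d. mean-one exponential variables. -/
def IsPoissonDirichlet {Ω : Type} [MeasurableSpace Ω] (μ : Measure Ω) (a : ℝ)
    (ξ : ℕ → Ω → ℝ) : Prop :=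
  ∃ (Ω' : Type) (_ : MeasurableSpace Ω') (ν : Measure Ω') (E : ℕ → Ω' → ℝ),
    IsProbabilityMeasure ν ∧
    iIndepFun E ν ∧
    (∀ i, Measure.map (E i) ν = expMeasureOne) ∧
    Measure.map (fun ω' (i : ℕ) =>
        (∑ j ∈ Finset.range (i + 1), E j ω') ^ (-(1 : ℝ) / a) /
          ∑' j : ℕ, (∑ k ∈ Finset.range (j + 1), E k ω') ^ (-(1 : ℝ) / a)) ν =
      Measure.map (fun ω (i : ℕ) => ξ i ω) μ

/-- Index type for the `s(s-1)/2` overlaps of `s` replicas: pairs `l < l'`. -/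
abbrev OffDiag (s : ℕ) := {p : Fin s × Fin s // p.1 < p.2}

/-- A square box of side length `N^{1-α}/100` centered at `w` (a box of `ℬ_α`). -/
def sqBox (N : ℕ) (α : ℝ) (w : Vertex) : Set Vertex :=
  {u | |((u.1 - w.1 : ℤ) : ℝ)| ≤ (N : ℝ) ^ (1 - α) / 200 ∧
    |((u.2 - w.2 : ℤ) : ℝ)| ≤ (N : ℝ) ^ (1 - α) / 200}

/-- `B̃`: the intersection of all the neighbourhoods `[u]_α`, `u ∈ B`, for the box `B`
of `ℬ_α` centered at `w`. -/
def tildeBox (N : ℕ) (α : ℝ) (w : Vertex) : Set Vertex :=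
  ⋂ u ∈ sqBox N α w, nbox N α u

/-- The `(α,σ⃗)`-GFF truncated at scale `t`: `ψ_v(t) = σ₁ φ_{[v]_t}` for `t ≤ α` and
`ψ_v(t) = σ₁ φ_{[v]_α} + σ₂(φ_{[v]_t} - φ_{[v]_α})` for `t ≥ α`. -/
def psiTrunc {Ω : Type} [MeasurableSpace Ω] (μ : Measure Ω) (N : ℕ) (α σ₁ σ₂ t : ℝ)
    (φ : Vertex → Ω → ℝ) (v : Vertex) (ω : Ω) : ℝ :=
  if t ≤ α then σ₁ * phiBox μ N t φ v ω
  else σ₁ * phiBox μ N α φ v ω + σ₂ * (phiBox μ N t φ v ω - phiBox μ N α φ v ω)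

/-- The side length (a positive integer) of the boxes of the partition `ℬ_t`. -/
def gridSide (N : ℕ) (t : ℝ) : ℕ := max 1 ⌈(N : ℝ) ^ (1 - t) / 100⌉₊

open Classical in
/-- `Π_t`: the centers of the boxes of the partition `ℬ_t` that belong to `V_N^δ`. -/
def gridPts (N : ℕ) (δ t : ℝ) : Finset Vertex :=
  (VNdelta N δ).filter fun v => (gridSide N t : ℤ) ∣ v.1 ∧ (gridSide N t : ℤ) ∣ v.2

open Classical in
/-- The number of points `v ∈ Π_t` with `ψ_v(t) ≥ γ √(2/π) log N²`. -/
def gridHigh {Ω : Type} [MeasurableSpace Ω] (μ : Measure Ω) (N : ℕ) (α σ₁ σ₂ δ t γ : ℝ)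
    (φ : Vertex → Ω → ℝ) (ω : Ω) : ℕ :=
  ((gridPts N δ t).filter fun v =>
    γ * Real.sqrt (2 / π) * Real.log ((N : ℝ) ^ 2) ≤ psiTrunc μ N α σ₁ σ₂ t φ v ω).card

open Classical in
/-- The set `ℋ_N^{ψ,δ}(γ)` of `γ`-high points of the `(α,σ⃗)`-GFF within `V_N^δ`. -/
def highPoints {Ω : Type} [MeasurableSpace Ω] (μ : Measure Ω) (N : ℕ) (α σ₁ σ₂ δ γ : ℝ)
    (φ : Vertex → Ω → ℝ) (ω : Ω) : Finset Vertex :=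
  (VNdelta N δ).filter fun v =>
    Real.sqrt (2 / π) * γ * Real.log ((N : ℝ) ^ 2) ≤ psiField μ N α σ₁ σ₂ φ v ω

/-!
For a fixed sample, the log-partition function is a log-sum-exp of functions affine in the
first-level parameters `c`, hence convex in `c`, and so is its expectation `Φ c`. Flipping the
sign of `c i` together with that of the symmetric variable `X₁ i` does not change the law of the
field, so `Φ c` depends only on `|c|`. A convex function on the box `|c| ≤ σ'` attains its maximum
at a vertex `(± σ' i)ᵢ`, where `Φ` equals `Φ σ'`.
-/

open Finset

theorem convexOn_log_sum_exp {V : Type*} [Fintype V] [Nonempty V] :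
    ConvexOn ℝ Set.univ fun x : V → ℝ => log (∑ v, exp (x v)) := by
  refine ⟨convex_univ, fun x _ y _ a b ha hb hab => ?_⟩
  have hpos : ∀ z : V → ℝ, 0 < ∑ v, exp (z v) := fun z =>
    sum_pos (fun v _ => exp_pos _) univ_nonempty
  set s := log (∑ v, exp (x v))
  set t := log (∑ v, exp (y v))
  -- after normalising by `exp s` and `exp t`, convexity of `exp` bounds the sum by `a + b = 1`
  have key : ∑ v, exp ((a • x + b • y) v) ≤ exp (a * s + b * t) := calc
    ∑ v, exp ((a • x + b • y) v)
        = exp (a * s + b * t) * ∑ v, exp (a * (x v - s) + b * (y v - t)) := by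
          rw [mul_sum]
          refine sum_congr rfl fun v _ => ?_
          rw [← exp_add]
          congr 1
          simp only [Pi.add_apply, Pi.smul_apply, smul_eq_mul]
          ring
    _ ≤ exp (a * s + b * t) * ∑ v, (a * exp (x v - s) + b * exp (y v - t)) := by
          gcongr with v
          simpa using convexOn_exp.2 (Set.mem_univ (x v - s)) (Set.mem_univ (y v - t)) ha hb hab
    _ = exp (a * s + b * t) := by
          simp only [sum_add_distrib, ← mul_sum, exp_sub, ← sum_div, s, t,
            exp_log (hpos x), exp_log (hpos y), div_self (hpos x).ne', div_self (hpos y).ne']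
          rw [mul_one, mul_one, hab, mul_one]
  simpa only [smul_eq_mul] using (log_le_iff_le_exp (hpos _)).2 key

theorem abs_log_sum_exp_le {V : Type*} [Fintype V] [Nonempty V] (x : V → ℝ) :
    |log (∑ v, exp (x v))| ≤ log (Fintype.card V) + ∑ v, |x v| := by
  have hpos : 0 < ∑ v, exp (x v) := sum_pos (fun v _ => exp_pos _) univ_nonempty
  have hcard : 0 ≤ log (Fintype.card V) :=
    log_nonneg (by exact_mod_cast Fintype.card_pos)
  have hle : ∀ u, |x u| ≤ ∑ v, |x v| := fun u =>
    single_le_sum (fun v _ => abs_nonneg (x v)) (mem_univ u)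
  obtain ⟨u⟩ := ‹Nonempty V›
  rw [abs_le]
  constructor
  · have : x u ≤ log (∑ v, exp (x v)) :=
      (le_log_iff_exp_le hpos).2 (single_le_sum (fun v _ => (exp_pos (x v)).le) (mem_univ u))
    linarith [neg_abs_le (x u), hle u]
  · calc log (∑ v, exp (x v)) ≤ log (∑ _v : V, exp (∑ w, |x w|)) :=
          log_le_log hpos (sum_le_sum fun v _ => exp_le_exp.2 ((le_abs_self _).trans (hle v)))
      _ = log (Fintype.card V) + ∑ v, |x v| := by
          rw [sum_const, card_univ, nsmul_eq_mul, log_mul (by positivity) (exp_pos _).ne', log_exp]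

theorem ConvexOn.integral {E Ω : Type*} [AddCommGroup E] [Module ℝ E] [MeasurableSpace Ω]
    {μ : Measure Ω} {s : Set E} {f : E → Ω → ℝ} (hs : Convex ℝ s)
    (hconv : ∀ ω, ConvexOn ℝ s fun x => f x ω) (hint : ∀ x ∈ s, Integrable (f x) μ) :
    ConvexOn ℝ s fun x => ∫ ω, f x ω ∂μ := by
  refine ⟨hs, fun x hx y hy a b ha hb hab => ?_⟩
  calc ∫ ω, f (a • x + b • y) ω ∂μ ≤ ∫ ω, a * f x ω + b * f y ω ∂μ :=
        integral_mono (hint _ (hs hx hy ha hb hab))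
          (((hint x hx).const_mul a).add ((hint y hy).const_mul b))
          fun ω => (hconv ω).2 hx hy ha hb hab
    _ = a • ∫ ω, f x ω ∂μ + b • ∫ ω, f y ω ∂μ := by
        rw [integral_add ((hint x hx).const_mul a) ((hint y hy).const_mul b),
          integral_const_mul, integral_const_mul, smul_eq_mul, smul_eq_mul]

theorem ConvexOn.le_of_abs_le {ι : Type*} [Finite ι] {φ : (ι → ℝ) → ℝ}
    (hconv : ConvexOn ℝ Set.univ φ) (habs : ∀ c, φ |c| = φ c) {c c' : ι → ℝ} (h : |c| ≤ c') :
    φ c ≤ φ c' := by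
  have hc : c ∈ convexHull ℝ (Set.univ.pi fun i => {-c' i, c' i}) := by
    rw [convexHull_pi]
    intro i _
    have hi : |c i| ≤ c' i := h i
    show c i ∈ convexHull ℝ {-c' i, c' i}
    rw [convexHull_pair, segment_eq_Icc (by linarith [abs_nonneg (c i)])]
    exact abs_le.1 hi
  obtain ⟨y, hy, hle⟩ := hconv.exists_ge_of_mem_convexHull (Set.subset_univ _) hc
  have hy' : |y| = c' := funext fun i => by
    have hc'i : 0 ≤ c' i := (abs_nonneg (c i)).trans (h i)
    obtain hyi | hyi : y i = -c' i ∨ y i = c' i := hy i trivial <;> simp [hyi, abs_of_nonneg hc'i]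
  rwa [← habs y, hy'] at hle

instance gaussianReal_zero_isNegInvariant (v : NNReal) : (gaussianReal 0 v).IsNegInvariant :=
  ⟨by simpa [Measure.neg_def] using gaussianReal_map_neg (μ := 0) (v := v)⟩

section HierarchicalField

variable {κ V : Type*} [Fintype V] (p : V → κ) (β σ₂ : ℝ)

/-- `p v` is the first-level ancestor of the vertex `v`; the coordinates `x (inl i)` and
`x (inr v)` carry the first- and second-level variables. -/
def hierLogPartition (c : κ → ℝ) (x : κ ⊕ V → ℝ) : ℝ :=
  log (∑ v, exp (β * (c (p v) * x (.inl (p v)) + σ₂ * x (.inr v))))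

variable [Nonempty V]

theorem convexOn_hierLogPartition (x : κ ⊕ V → ℝ) :
    ConvexOn ℝ Set.univ fun c => hierLogPartition p β σ₂ c x := by
  refine ⟨convex_univ, fun c _ d _ a b ha hb hab => ?_⟩
  let field : (κ → ℝ) → V → ℝ := fun c v => β * (c (p v) * x (.inl (p v)) + σ₂ * x (.inr v))
  have hfield : field (a • c + b • d) = a • field c + b • field d := by
    funext v
    simp only [field, Pi.add_apply, Pi.smul_apply, smul_eq_mul]
    linear_combination (-(β * σ₂ * x (.inr v))) * hab
  have h := convexOn_log_sum_exp.2 (Set.mem_univ (field c)) (Set.mem_univ (field d)) ha hb hab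
  rwa [← hfield] at h

theorem continuous_hierLogPartition (c : κ → ℝ) : Continuous (hierLogPartition p β σ₂ c) :=
  Continuous.log (by fun_prop) fun _ => (sum_pos (fun _ _ => exp_pos _) univ_nonempty).ne'

variable [Fintype κ] (ν : κ ⊕ V → Measure ℝ) [∀ j, IsProbabilityMeasure (ν j)]

theorem integrable_hierLogPartition (hν : ∀ j, Integrable id (ν j)) (c : κ → ℝ) :
    Integrable (hierLogPartition p β σ₂ c) (Measure.pi ν) := by
  have hcoord : ∀ j, Integrable (fun x : κ ⊕ V → ℝ => x j) (Measure.pi ν) := fun j =>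
    (measurePreserving_eval ν j).integrable_comp_of_integrable (hν j)
  have hbound : Integrable (fun x : κ ⊕ V → ℝ => log (Fintype.card V) +
      ∑ v, |β * (c (p v) * x (.inl (p v)) + σ₂ * x (.inr v))|) (Measure.pi ν) :=
    (integrable_const _).add (integrable_finsetSum _ fun v _ =>
      ((((hcoord _).const_mul _).add ((hcoord _).const_mul _)).const_mul _).abs)
  exact hbound.mono (continuous_hierLogPartition p β σ₂ c).aestronglyMeasurable
    (ae_of_all _ fun x => (abs_log_sum_exp_le _).trans (le_abs_self _))

theorem integral_hierLogPartition_abs [∀ i, (ν (.inl i)).IsNegInvariant] (c : κ → ℝ) :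
    ∫ x, hierLogPartition p β σ₂ |c| x ∂Measure.pi ν =
      ∫ x, hierLogPartition p β σ₂ c x ∂Measure.pi ν := by
  let flip : κ ⊕ V → ℝ → ℝ := Sum.elim (fun i => if c i < 0 then Neg.neg else id) fun _ => id
  have hflip : MeasurePreserving (fun x j => flip j (x j)) (Measure.pi ν) (Measure.pi ν) := by
    refine measurePreserving_pi _ _ fun j => ?_
    rcases j with i | v
    · by_cases hi : c i < 0
      · simpa [flip, hi] using Measure.measurePreserving_neg (ν (.inl i))
      · simpa [flip, hi] using MeasurePreserving.id (ν (.inl i))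
    · exact MeasurePreserving.id _
  have hcomp : ∀ x, hierLogPartition p β σ₂ |c| (fun j => flip j (x j)) =
      hierLogPartition p β σ₂ c x := fun x => by
    unfold hierLogPartition
    congr 1
    refine sum_congr rfl fun v _ => ?_
    by_cases hv : c (p v) < 0
    · simp [flip, hv, abs_of_neg hv]
    · simp [flip, hv, abs_of_nonneg (not_lt.1 hv)]
  conv_rhs => simp only [← hcomp]
  rw [← integral_map hflip.aemeasurable
    (continuous_hierLogPartition p β σ₂ |c|).aestronglyMeasurable, hflip.map_eq]

theorem integral_hierLogPartition_mono (hν : ∀ j, Integrable id (ν j))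
    [∀ i, (ν (.inl i)).IsNegInvariant] {c c' : κ → ℝ} (h : |c| ≤ c') :
    ∫ x, hierLogPartition p β σ₂ c x ∂Measure.pi ν ≤
      ∫ x, hierLogPartition p β σ₂ c' x ∂Measure.pi ν :=
  (ConvexOn.integral convex_univ (convexOn_hierLogPartition p β σ₂)
    fun c _ => integrable_hierLogPartition p β σ₂ ν hν c).le_of_abs_le
      (integral_hierLogPartition_abs p β σ₂ ν) h

end HierarchicalField

theorem stmt_13_general
    (N₁ N₂ : ℕ) (Ω : Type) [MeasurableSpace Ω] (μ : Measure Ω)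
    (X₁ : Fin N₁ → Ω → ℝ) (X₂ : Fin N₁ × Fin N₂ → Ω → ℝ)
    (hind : iIndepFun
      (Sum.elim X₁ X₂ : Sum (Fin N₁) (Fin N₁ × Fin N₂) → Ω → ℝ) μ)
    (h1 : ∀ i, Measure.map (X₁ i) μ = gaussianReal 0 1)
    (h2 : ∀ p, Measure.map (X₂ p) μ = gaussianReal 0 1)
    (β : ℝ) (σ₂ : ℝ)
    (σ σ' : Fin N₁ → ℝ) (hσ : ∀ i, 0 < σ i) (hle : σ ≤ σ') :
    (∫ ω, Real.log (∑ v : Fin N₁ × Fin N₂,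
        Real.exp (β * (σ v.1 * X₁ v.1 ω + σ₂ * X₂ v ω))) ∂μ) ≤
      ∫ ω, Real.log (∑ v : Fin N₁ × Fin N₂,
        Real.exp (β * (σ' v.1 * X₁ v.1 ω + σ₂ * X₂ v ω))) ∂μ := by
  rcases isEmpty_or_nonempty (Fin N₁ × Fin N₂) with hV | hV
  · simp [Finset.univ_eq_empty]
  have hlaw : HasLaw (fun ω j => Sum.elim X₁ X₂ j ω)
      (Measure.pi fun _ => gaussianReal 0 1) μ := by
    refine hind.hasLaw_pi fun j => ?_
    have hmap : μ.map (Sum.elim X₁ X₂ j) = gaussianReal 0 1 := by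
      rcases j with i | v
      exacts [h1 i, h2 v]
    exact ⟨aemeasurable_of_map_neZero (by rw [hmap]; infer_instance), hmap⟩
  have hpull : ∀ c : Fin N₁ → ℝ, (∫ ω, log (∑ v : Fin N₁ × Fin N₂,
      exp (β * (c v.1 * X₁ v.1 ω + σ₂ * X₂ v ω))) ∂μ) =
        ∫ x, hierLogPartition Prod.fst β σ₂ c x ∂Measure.pi fun _ => gaussianReal 0 1 :=
    fun c => hlaw.integral_comp (continuous_hierLogPartition _ β σ₂ c).aestronglyMeasurable
  rw [hpull σ, hpull σ']
  exact integral_hierLogPartition_mono _ β σ₂ _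
    (fun _ => (memLp_id_gaussianReal 1).integrable le_rfl)
    fun i => (abs_of_pos (hσ i)).trans_le (hle i)

/-- the expected log-partition function of a 2-level hierarchical
Gaussian field is increasing in the variance parameters of the first level. -/
theorem stmt_13
    (N₁ N₂ : ℕ) (Ω : Type) [MeasurableSpace Ω] (μ : Measure Ω) [IsProbabilityMeasure μ]
    (X₁ : Fin N₁ → Ω → ℝ) (X₂ : Fin N₁ × Fin N₂ → Ω → ℝ)
    (hind : iIndepFun
      (Sum.elim X₁ X₂ : Sum (Fin N₁) (Fin N₁ × Fin N₂) → Ω → ℝ) μ)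
    (h1 : ∀ i, Measure.map (X₁ i) μ = gaussianReal 0 1)
    (h2 : ∀ p, Measure.map (X₂ p) μ = gaussianReal 0 1)
    (β : ℝ) (hβ : 0 < β) (σ₂ : ℝ) (hσ₂ : 0 < σ₂)
    (σ σ' : Fin N₁ → ℝ) (hσ : ∀ i, 0 < σ i) (hσ' : ∀ i, 0 < σ' i) (hle : σ ≤ σ') :
    (∫ ω, Real.log (∑ v : Fin N₁ × Fin N₂,
        Real.exp (β * (σ v.1 * X₁ v.1 ω + σ₂ * X₂ v ω))) ∂μ) ≤
      ∫ ω, Real.log (∑ v : Fin N₁ × Fin N₂,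
        Real.exp (β * (σ' v.1 * X₁ v.1 ω + σ₂ * X₂ v ω))) ∂μ :=
  stmt_13_general N₁ N₂ Ω μ X₁ X₂ hind h1 h2 β σ₂ σ σ' hσ hle
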